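/- Let E be admissible, h > 0, t_n := nh, and let (x_n) be defined recursively by x_0 = x̄ ∈ Dom(E) and x_n a minimizer of x ↦ E_{t_n}(x) + d_{t_n}(x, x_{n−1})²/(2h). Then for every m with mh ≤ T: E_{t_m}(x_m) ≤ E_0(x̄) + T L*, and (1/(2h)) Σ_{n=1}^m d_{t_n}(x_n, x_{n−1})² ≤ E_0(x̄) − E_{t_m}(x_m) + T L* ≤ E_0(x̄) − inf_{t,x} E_t(x) + T L*. -/

import Mathlib

open MeasureTheory Filter Topology Set
open scoped ENNReal NNReal

/-- A time-dependent family of complete separable geodesic metrics `d t` (`t ∈ [0,T]`) on a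
topological space `X`, all inducing the given topology, whose mutual deviation is
log-Lipschitz in time with constant `L`. -/
structure DynMetric (X : Type*) [TopologicalSpace X] (T : ℝ) (L : ℝ) : Type _ where
  d : ℝ → X → X → ℝ
  d_self : ∀ t ∈ Set.Icc (0:ℝ) T, ∀ x : X, d t x x = 0
  d_pos : ∀ t ∈ Set.Icc (0:ℝ) T, ∀ x y : X, x ≠ y → 0 < d t x y
  d_symm : ∀ t ∈ Set.Icc (0:ℝ) T, ∀ x y : X, d t x y = d t y x
  d_triangle : ∀ t ∈ Set.Icc (0:ℝ) T, ∀ x y z : X, d t x z ≤ d t x y + d t y z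
  nhds_basis : ∀ t ∈ Set.Icc (0:ℝ) T, ∀ x : X,
    (𝓝 x).HasBasis (fun ε : ℝ => 0 < ε) (fun ε => {y : X | d t x y < ε})
  complete : ∀ t ∈ Set.Icc (0:ℝ) T, ∀ u : ℕ → X,
    (∀ ε : ℝ, 0 < ε → ∃ N : ℕ, ∀ m ≥ N, ∀ n ≥ N, d t (u m) (u n) < ε) →
    ∃ x : X, Tendsto u atTop (𝓝 x)
  separable : ∃ s : Set X, s.Countable ∧ Dense s
  geodesic : ∀ t ∈ Set.Icc (0:ℝ) T, ∀ x y : X, ∃ γ : ℝ → X, γ 0 = x ∧ γ 1 = y ∧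
    ∀ a ∈ Set.Icc (0:ℝ) 1, ∀ b ∈ Set.Icc (0:ℝ) 1, d t (γ a) (γ b) = |a - b| * d t x y
  logLip : ∀ s ∈ Set.Icc (0:ℝ) T, ∀ t ∈ Set.Icc (0:ℝ) T, ∀ x y : X, x ≠ y →
    |Real.log (d t x y / d s x y)| ≤ L * |t - s|

/-- The (descending) metricSlope of `F` at `x` with respect to the distance `ρ`. -/
noncomputable def metricSlope {X : Type*} [TopologicalSpace X] (ρ : X → X → ℝ) (F : X → EReal)
    (x : X) : ℝ≥0∞ :=
  Filter.limsup (fun y => ENNReal.ofReal ((max (F x - F y) 0).toReal / ρ x y)) (𝓝[≠] x)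

/-- An admissible time-dependent energy functional `E : [0,T] × X → (−∞,+∞]`:
time-independent nonempty domain, uniform lower bound, lower semicontinuity,
uniform Lipschitz dependence on time on the domain, and a common (full-measure) set of
differentiability points in time, with derivative `deriv`. -/
structure Admissible {X : Type*} [TopologicalSpace X] (T : ℝ) (E : ℝ → X → EReal) : Type _ where
  dom : Set X
  dom_nonempty : dom.Nonempty
  finite_iff : ∀ t ∈ Set.Icc (0:ℝ) T, ∀ x : X, E t x < ⊤ ↔ x ∈ dom
  ne_bot : ∀ t ∈ Set.Icc (0:ℝ) T, ∀ x : X, E t x ≠ ⊥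
  lowBound : ℝ
  le_energy : ∀ t ∈ Set.Icc (0:ℝ) T, ∀ x : X, (lowBound : EReal) ≤ E t x
  lsc : ∀ t ∈ Set.Icc (0:ℝ) T, LowerSemicontinuous (E t)
  lipT : ℝ
  lipT_nonneg : 0 ≤ lipT
  lip : ∀ s ∈ Set.Icc (0:ℝ) T, ∀ t ∈ Set.Icc (0:ℝ) T, ∀ x ∈ dom,
    |(E t x).toReal - (E s x).toReal| ≤ lipT * |t - s|
  deriv : ℝ → X → ℝ
  diffSet : Set ℝ
  diffSet_subset : diffSet ⊆ Set.Icc (0:ℝ) T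
  diffSet_ae : volume (Set.Icc (0:ℝ) T \ diffSet) = 0
  hasDeriv : ∀ t ∈ diffSet, ∀ x ∈ dom,
    HasDerivWithinAt (fun r => (E r x).toReal) (deriv t x) (Set.Icc (0:ℝ) T) t

/-!
Testing the minimality of `x n` against the previous point `x (n-1)` gives
`E_{t_n}(x_n) + d²(x_n, x_{n-1})/(2h) ≤ E_{t_n}(x_{n-1}) ≤ E_{t_{n-1}}(x_{n-1}) + L* h`,
the second step by the Lipschitz dependence of the energy on time. Summing these one-step
inequalities telescopes to `E_{t_m}(x_m) + (1/(2h)) Σ d² ≤ E_0(x̄) + m h L*`, and `m h ≤ T`.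
-/

theorem add_sum_Icc_le_of_forall_lt {e c : ℕ → ℝ} {a : ℝ} {m : ℕ}
    (hstep : ∀ k < m, e (k + 1) + c (k + 1) ≤ e k + a) :
    e m + ∑ n ∈ Finset.Icc 1 m, c n ≤ e 0 + m * a := by
  induction m with
  | zero => simp
  | succ k ih =>
    have hk := hstep k k.lt_succ_self
    have ih := ih fun j hj => hstep j (hj.trans k.lt_succ_self)
    rw [Finset.sum_Icc_succ_top (Nat.le_add_left 1 k)]
    push_cast
    linarith

namespace Admissible

variable {X : Type*} [TopologicalSpace X] {T : ℝ} {E : ℝ → X → EReal} (A : Admissible T E)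
  {s t : ℝ} {y z : X}

theorem coe_toReal (ht : t ∈ Set.Icc (0:ℝ) T) (hz : z ∈ A.dom) :
    (((E t z).toReal : ℝ) : EReal) = E t z :=
  EReal.coe_toReal ((A.finite_iff t ht z).mpr hz).ne (A.ne_bot t ht z)

theorem mem_dom_of_le (ht : t ∈ Set.Icc (0:ℝ) T) (hz : z ∈ A.dom) (hle : E t y ≤ E t z) :
    y ∈ A.dom :=
  (A.finite_iff t ht y).mp (hle.trans_lt ((A.finite_iff t ht z).mpr hz))

theorem toReal_add_le (ht : t ∈ Set.Icc (0:ℝ) T) (hy : y ∈ A.dom) (hz : z ∈ A.dom) {c : ℝ}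
    (hle : E t y + c ≤ E t z) : (E t y).toReal + c ≤ (E t z).toReal := by
  rw [← A.coe_toReal ht hy, ← A.coe_toReal ht hz] at hle
  exact_mod_cast hle

theorem toReal_le_add_lipT (hs : s ∈ Set.Icc (0:ℝ) T) (ht : t ∈ Set.Icc (0:ℝ) T)
    (hz : z ∈ A.dom) : (E t z).toReal ≤ (E s z).toReal + A.lipT * |t - s| := by
  linarith [(abs_le.mp (A.lip s hs t ht z hz)).2]

theorem bddBelow_toReal :
    BddBelow {v : ℝ | ∃ t ∈ Set.Icc (0:ℝ) T, ∃ z ∈ A.dom, v = (E t z).toReal} := by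
  refine ⟨A.lowBound, ?_⟩
  rintro v ⟨t, ht, z, hz, rfl⟩
  have hlow := A.le_energy t ht z
  rw [← A.coe_toReal ht hz] at hlow
  exact_mod_cast hlow

end Admissible

def IsMinimizingMovement {X : Type*} [TopologicalSpace X] {T L : ℝ} (D : DynMetric X T L)
    (E : ℝ → X → EReal) (h : ℝ) (x : ℕ → X) : Prop :=
  ∀ n : ℕ, 1 ≤ n → (n : ℝ) * h ≤ T → ∀ z : X,
    E ((n : ℝ)*h) (x n) + (((D.d ((n : ℝ)*h) (x n) (x (n-1)))^2 / (2*h) : ℝ) : EReal)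
      ≤ E ((n : ℝ)*h) z + (((D.d ((n : ℝ)*h) z (x (n-1)))^2 / (2*h) : ℝ) : EReal)

namespace IsMinimizingMovement

variable {X : Type*} [TopologicalSpace X] {T L : ℝ} {D : DynMetric X T L} {E : ℝ → X → EReal}
  {h : ℝ} {x : ℕ → X}

theorem le_previous (hmin : IsMinimizingMovement D E h x) {k : ℕ}
    (hk : ((k + 1 : ℕ) : ℝ) * h ≤ T) (hh : 0 ≤ h) :
    E ((k + 1 : ℕ) * h) (x (k + 1))
        + (((D.d ((k + 1 : ℕ) * h) (x (k + 1)) (x k))^2 / (2*h) : ℝ) : EReal)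
      ≤ E ((k + 1 : ℕ) * h) (x k) := by
  have ht : ((k + 1 : ℕ) : ℝ) * h ∈ Set.Icc (0:ℝ) T := ⟨by positivity, hk⟩
  have hstep := hmin (k + 1) k.succ_pos hk (x k)
  rwa [Nat.add_sub_cancel, D.d_self _ ht, zero_pow two_ne_zero, zero_div, EReal.coe_zero,
    add_zero] at hstep

theorem mem_dom (hmin : IsMinimizingMovement D E h x) (A : Admissible T E) (hh : 0 ≤ h)
    (h0 : x 0 ∈ A.dom) : ∀ k : ℕ, (k : ℝ) * h ≤ T → x k ∈ A.dom
  | 0, _ => h0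
  | k + 1, hk => by
    have hprev := mem_dom hmin A hh h0 k (le_trans (by gcongr; simp) hk)
    refine A.mem_dom_of_le ⟨by positivity, hk⟩ hprev
      (le_trans (le_add_of_nonneg_right ?_) (hmin.le_previous hk hh))
    exact_mod_cast (by positivity : (0:ℝ) ≤ _)

theorem energy_step (hmin : IsMinimizingMovement D E h x) (A : Admissible T E) (hh : 0 ≤ h)
    (h0 : x 0 ∈ A.dom) {k : ℕ} (hk : ((k + 1 : ℕ) : ℝ) * h ≤ T) :
    (E ((k + 1 : ℕ) * h) (x (k + 1))).toReal + (D.d ((k + 1 : ℕ) * h) (x (k + 1)) (x k))^2 / (2*h)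
      ≤ (E (k * h) (x k)).toReal + A.lipT * h := by
  have hkT : (k : ℝ) * h ≤ T := le_trans (by gcongr; simp) hk
  have ht : ((k + 1 : ℕ) : ℝ) * h ∈ Set.Icc (0:ℝ) T := ⟨by positivity, hk⟩
  have hprev := hmin.mem_dom A hh h0 k hkT
  have hdecrease := A.toReal_add_le ht (hmin.mem_dom A hh h0 (k + 1) hk) hprev
    (hmin.le_previous hk hh)
  have hlip := A.toReal_le_add_lipT ⟨by positivity, hkT⟩ ht hprev
  rw [show ((k + 1 : ℕ) : ℝ) * h - k * h = h by push_cast; ring, abs_of_nonneg hh] at hlip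
  linarith

theorem energy_add_sum_le (hmin : IsMinimizingMovement D E h x) (A : Admissible T E)
    (hh : 0 ≤ h) (h0 : x 0 ∈ A.dom) {m : ℕ} (hm : (m : ℝ) * h ≤ T) :
    (E (m * h) (x m)).toReal + (1/(2*h)) * ∑ n ∈ Finset.Icc 1 m, (D.d (n * h) (x n) (x (n-1)))^2
      ≤ (E 0 (x 0)).toReal + m * h * A.lipT := by
  have htelescope := add_sum_Icc_le_of_forall_lt (m := m) (a := A.lipT * h)
    (e := fun n => (E (n * h) (x n)).toReal)
    (c := fun n => (D.d (n * h) (x n) (x (n-1)))^2 / (2*h))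
    fun k hk => hmin.energy_step A hh h0 (le_trans (by gcongr; exact_mod_cast hk) hm)
  simp only [Nat.cast_zero, zero_mul, ← Finset.sum_div] at htelescope
  rw [one_div_mul_eq_div]
  linarith

end IsMinimizingMovement

theorem discrete_scheme_apriori_bounds_general {X : Type*} [TopologicalSpace X] {T L : ℝ}
    (D : DynMetric X T L) (E : ℝ → X → EReal)
    (A : Admissible T E) (h : ℝ) (hh : 0 < h)
    (xbar : X) (hxbar : xbar ∈ A.dom) (x : ℕ → X) (hx0 : x 0 = xbar)
    (hmin : ∀ n : ℕ, 1 ≤ n → (n : ℝ) * h ≤ T → ∀ z : X,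
      E ((n : ℝ)*h) (x n) + (((D.d ((n : ℝ)*h) (x n) (x (n-1)))^2 / (2*h) : ℝ) : EReal)
        ≤ E ((n : ℝ)*h) z + (((D.d ((n : ℝ)*h) z (x (n-1)))^2 / (2*h) : ℝ) : EReal)) :
    ∀ m : ℕ, (m : ℝ) * h ≤ T →
      (E ((m : ℝ)*h) (x m)).toReal ≤ (E 0 xbar).toReal + T * A.lipT ∧
      (1/(2*h)) * (∑ n ∈ Finset.Icc 1 m, (D.d ((n : ℝ)*h) (x n) (x (n-1)))^2)
        ≤ (E 0 xbar).toReal - (E ((m : ℝ)*h) (x m)).toReal + T * A.lipT ∧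
      (E 0 xbar).toReal - (E ((m : ℝ)*h) (x m)).toReal + T * A.lipT
        ≤ (E 0 xbar).toReal
          - sInf {v : ℝ | ∃ t ∈ Set.Icc (0:ℝ) T, ∃ z ∈ A.dom, v = (E t z).toReal}
          + T * A.lipT := by
  intro m hm
  have hscheme : IsMinimizingMovement D E h x := hmin
  subst hx0
  have henergy := hscheme.energy_add_sum_le A hh.le hxbar hm
  have hsum_nonneg : 0 ≤ (1/(2*h)) * ∑ n ∈ Finset.Icc 1 m, (D.d (n * h) (x n) (x (n-1)))^2 :=
    mul_nonneg (by positivity) (Finset.sum_nonneg fun _ _ => sq_nonneg _)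
  have hlipT : (m : ℝ) * h * A.lipT ≤ T * A.lipT := mul_le_mul_of_nonneg_right hm A.lipT_nonneg
  have hinf := csInf_le A.bddBelow_toReal
    ⟨(m : ℝ) * h, ⟨by positivity, hm⟩, x m, hscheme.mem_dom A hh.le hxbar m hm, rfl⟩
  exact ⟨by linarith, by linarith, by linarith⟩

/-- A priori estimates for the minimizing movement scheme: energy bound
along the discrete solutions and the summed squared-distance estimate. -/
theorem discrete_scheme_apriori_bounds {X : Type*} [TopologicalSpace X] {T L : ℝ}
    (hT : 0 < T) (hL : 0 ≤ L) (D : DynMetric X T L) (E : ℝ → X → EReal)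
    (A : Admissible T E) (h : ℝ) (hh : 0 < h)
    (xbar : X) (hxbar : xbar ∈ A.dom) (x : ℕ → X) (hx0 : x 0 = xbar)
    (hmin : ∀ n : ℕ, 1 ≤ n → (n : ℝ) * h ≤ T → ∀ z : X,
      E ((n : ℝ)*h) (x n) + (((D.d ((n : ℝ)*h) (x n) (x (n-1)))^2 / (2*h) : ℝ) : EReal)
        ≤ E ((n : ℝ)*h) z + (((D.d ((n : ℝ)*h) z (x (n-1)))^2 / (2*h) : ℝ) : EReal)) :
    ∀ m : ℕ, (m : ℝ) * h ≤ T →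
      (E ((m : ℝ)*h) (x m)).toReal ≤ (E 0 xbar).toReal + T * A.lipT ∧
      (1/(2*h)) * (∑ n ∈ Finset.Icc 1 m, (D.d ((n : ℝ)*h) (x n) (x (n-1)))^2)
        ≤ (E 0 xbar).toReal - (E ((m : ℝ)*h) (x m)).toReal + T * A.lipT ∧
      (E 0 xbar).toReal - (E ((m : ℝ)*h) (x m)).toReal + T * A.lipT
        ≤ (E 0 xbar).toReal
          - sInf {v : ℝ | ∃ t ∈ Set.Icc (0:ℝ) T, ∃ z ∈ A.dom, v = (E t z).toReal}
          + T * A.lipT :=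
  discrete_scheme_apriori_bounds_general D E A h hh xbar hxbar x hx0 hmin
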